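/- Let d ≥ 2, F ∈ [0,1], and let ρ_F be the isotropic state on ℂ^d ⊗ ℂ^d. Then τ(𝔄(ρ_F)) = dF if 1/d² ≤ F ≤ 1, and τ(𝔄(ρ_F)) = 2/d − dF if 0 ≤ F < 1/d². -/

import Mathlib

open scoped Matrix Kronecker BigOperators ComplexOrder
open MeasureTheory

/-- Trace norm of a complex square matrix: `tr √(AᴴA)` (the sum of singular values). -/
noncomputable def traceNorm {n : Type*} [Fintype n] [DecidableEq n] (A : Matrix n n ℂ) : ℝ :=
  ((((Matrix.posSemidef_conjTranspose_mul_self A).1.eigenvectorUnitary : Matrix n n ℂ) *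
      Matrix.diagonal (fun i => ((Real.sqrt
        ((Matrix.posSemidef_conjTranspose_mul_self A).1.eigenvalues i) : ℝ) : ℂ)) *
      (star (Matrix.posSemidef_conjTranspose_mul_self A).1.eigenvectorUnitary :
        Matrix n n ℂ)).trace).re

/-- The greatest cross norm `‖·‖_γ` of an operator on `ℂ^{d₁} ⊗ ℂ^{d₂}`: the infimum of
`Σᵢ ‖uᵢ‖₁ ‖vᵢ‖₁` over all finite decompositions `T = Σᵢ uᵢ ⊗ vᵢ` into Kronecker products. -/
noncomputable def gcn {d₁ d₂ : ℕ} (T : Matrix (Fin d₁ × Fin d₂) (Fin d₁ × Fin d₂) ℂ) : ℝ :=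
  sInf { r : ℝ | ∃ (n : ℕ) (u : Fin n → Matrix (Fin d₁) (Fin d₁) ℂ)
      (v : Fin n → Matrix (Fin d₂) (Fin d₂) ℂ),
      T = ∑ i, u i ⊗ₖ v i ∧ r = ∑ i, traceNorm (u i) * traceNorm (v i) }

/-- A density matrix: positive semidefinite with trace one. -/
def IsDensityMatrix {n : Type*} [Fintype n] (ρ : Matrix n n ℂ) : Prop :=
  ρ.PosSemidef ∧ ρ.trace = 1

/-- Separability of a state on `ℂ^{d₁} ⊗ ℂ^{d₂}`: a finite convex-type combination
`ρ = Σᵢ ωᵢ ρᵢ⁽¹⁾ ⊗ ρᵢ⁽²⁾` of Kronecker products of density matrices, with `ωᵢ ≥ 0`. -/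
def IsSeparable' {d₁ d₂ : ℕ} (ρ : Matrix (Fin d₁ × Fin d₂) (Fin d₁ × Fin d₂) ℂ) : Prop :=
  ∃ (n : ℕ) (ω : Fin n → ℝ) (ρ₁ : Fin n → Matrix (Fin d₁) (Fin d₁) ℂ)
    (ρ₂ : Fin n → Matrix (Fin d₂) (Fin d₂) ℂ),
    (∀ i, 0 ≤ ω i) ∧ (∀ i, IsDensityMatrix (ρ₁ i)) ∧ (∀ i, IsDensityMatrix (ρ₂ i)) ∧
    ρ = ∑ i, (ω i : ℂ) • (ρ₁ i ⊗ₖ ρ₂ i)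

/-- The realignment map `𝔄`: `𝔄(ρ)_{(i,j),(k,l)} = ρ_{(i,k),(j,l)}`. -/
def realign {d : ℕ} (ρ : Matrix (Fin d × Fin d) (Fin d × Fin d) ℂ) :
    Matrix (Fin d × Fin d) (Fin d × Fin d) ℂ :=
  Matrix.of fun p q => ρ (p.1, q.1) (p.2, q.2)

/-- `τ(𝔄(ρ))`: the trace norm of the realignment of `ρ`. -/
noncomputable def tauRealign {d : ℕ} (ρ : Matrix (Fin d × Fin d) (Fin d × Fin d) ℂ) : ℝ :=
  traceNorm (realign ρ)

/-- The flip operator `𝔽 = Σ_{i,j} |i⊗j⟩⟨j⊗i|` on `ℂ^d ⊗ ℂ^d`. -/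
def flipOp (d : ℕ) : Matrix (Fin d × Fin d) (Fin d × Fin d) ℂ :=
  Matrix.of fun p q => if p.1 = q.2 ∧ p.2 = q.1 then 1 else 0

/-- The Werner state `ρ_f = (1/(d³−d))((d−f) I + (df−1) 𝔽)` on `ℂ^d ⊗ ℂ^d`. -/
noncomputable def wernerState (d : ℕ) (f : ℝ) : Matrix (Fin d × Fin d) (Fin d × Fin d) ℂ :=
  (((d : ℂ) ^ 3 - d)⁻¹) • (((d : ℂ) - (f : ℂ)) • (1 : Matrix (Fin d × Fin d) (Fin d × Fin d) ℂ)
    + ((d : ℂ) * (f : ℂ) - 1) • flipOp d)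

/-- The maximally entangled vector `|Ψ⁺⟩ = (1/√d) Σᵢ |i⊗i⟩` on `ℂ^d ⊗ ℂ^d`. -/
noncomputable def psiPlus (d : ℕ) : Fin d × Fin d → ℂ :=
  fun p => if p.1 = p.2 then ((1 / Real.sqrt d : ℝ) : ℂ) else 0

/-- The isotropic state `ρ_F = ((1−F)/(d²−1))(I − |Ψ⁺⟩⟨Ψ⁺|) + F |Ψ⁺⟩⟨Ψ⁺|` on `ℂ^d ⊗ ℂ^d`. -/
noncomputable def isotropicState (d : ℕ) (F : ℝ) : Matrix (Fin d × Fin d) (Fin d × Fin d) ℂ :=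
  (((1 - F : ℝ) : ℂ) / ((d : ℂ) ^ 2 - 1)) •
      ((1 : Matrix (Fin d × Fin d) (Fin d × Fin d) ℂ)
        - Matrix.vecMulVec (psiPlus d) (star (psiPlus d)))
    + ((F : ℝ) : ℂ) • Matrix.vecMulVec (psiPlus d) (star (psiPlus d))

namespace TauAux

variable {d : ℕ}

noncomputable def Pm (d : ℕ) : Matrix (Fin d × Fin d) (Fin d × Fin d) ℂ :=
  Matrix.vecMulVec (psiPlus d) (star (psiPlus d))

lemma star_psiPlus (d : ℕ) : star (psiPlus d) = psiPlus d := by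
  funext p
  simp only [Pi.star_apply, psiPlus, apply_ite star, star_zero, Complex.star_def,
    Complex.conj_ofReal]

lemma csq (hd : 0 < d) : ((Real.sqrt d : ℝ) : ℂ)⁻¹ * ((Real.sqrt d : ℝ) : ℂ)⁻¹ = (d:ℂ)⁻¹ := by
  rw [← mul_inv, ← Complex.ofReal_mul, Real.mul_self_sqrt (by positivity), Complex.ofReal_natCast]

lemma Pm_apply (hd : 0 < d) (p q : Fin d × Fin d) :
    Pm d p q = if p.1 = p.2 ∧ q.1 = q.2 then (d:ℂ)⁻¹ else 0 := by
  rw [Pm, star_psiPlus, Matrix.vecMulVec_apply]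
  simp only [psiPlus]
  by_cases h1 : p.1 = p.2 <;> by_cases h2 : q.1 = q.2 <;> simp [h1, h2, csq hd]

lemma trace_Pm (hd : 0 < d) : (Pm d).trace = 1 := by
  have hdc : (d:ℂ) ≠ 0 := Nat.cast_ne_zero.mpr hd.ne'
  rw [Matrix.trace]
  simp only [Matrix.diag_apply, Pm_apply hd, and_self]
  rw [Fintype.sum_prod_type]
  simp [Finset.sum_ite_eq, Finset.sum_const, Finset.card_univ]
  field_simp

lemma Pm_mul_Pm (hd : 0 < d) : Pm d * Pm d = Pm d := by
  have hdc : (d:ℂ) ≠ 0 := Nat.cast_ne_zero.mpr hd.ne'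
  ext p q
  rw [Matrix.mul_apply]
  simp only [Pm_apply hd]
  by_cases hp : p.1 = p.2 <;> by_cases hq : q.1 = q.2 <;>
    simp [hp, hq, ← ite_and, Fintype.sum_prod_type, Finset.sum_ite_eq,
      Finset.sum_const, Finset.card_univ]
  field_simp

lemma Pm_herm (hd : 0 < d) : (Pm d)ᴴ = Pm d := by
  ext p q
  simp only [Matrix.conjTranspose_apply, Pm_apply hd, apply_ite star, star_zero, star_inv₀,
    star_natCast]
  simp [and_comm]

lemma affine_mul (hd : 0 < d) (x y : ℂ) :
    (x • Pm d + y • (1 : Matrix (Fin d × Fin d) (Fin d × Fin d) ℂ))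
      * (x • Pm d + y • 1) = (x*x + 2*(x*y)) • Pm d + (y*y) • 1 := by
  rw [add_mul, mul_add, mul_add]
  simp only [Matrix.smul_mul, Matrix.mul_smul, Pm_mul_Pm hd, Matrix.one_mul, Matrix.mul_one,
    smul_smul]
  module

lemma affine_herm (hd : 0 < d) (x y : ℝ) :
    ((x:ℂ) • Pm d + (y:ℂ) • (1 : Matrix (Fin d × Fin d) (Fin d × Fin d) ℂ))ᴴ
      = (x:ℂ) • Pm d + (y:ℂ) • 1 := by
  simp [Matrix.conjTranspose_smul, Pm_herm hd, Complex.star_def, Complex.conj_ofReal]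

lemma psd_real_smul {n : Type*} [Fintype n] {A : Matrix n n ℂ} (hA : A.PosSemidef)
    {r : ℝ} (hr : 0 ≤ r) : ((r:ℂ) • A).PosSemidef := by
  refine ⟨?_, fun x => ?_⟩
  · unfold Matrix.IsHermitian
    rw [Matrix.conjTranspose_smul, hA.1.eq, Complex.star_def, Complex.conj_ofReal]
  · exact (hA.smul (a := (r:ℂ)) (by exact_mod_cast Complex.zero_le_real.mpr hr)).2 x

lemma Pm_psd (hd : 0 < d) : (Pm d).PosSemidef := by
  have h := Matrix.posSemidef_conjTranspose_mul_self (Pm d)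
  rwa [Pm_herm hd, Pm_mul_Pm hd] at h

lemma Q_psd (hd : 0 < d) : ((1 : Matrix (Fin d × Fin d) (Fin d × Fin d) ℂ) - Pm d).PosSemidef := by
  have hq : ((1 : Matrix (Fin d × Fin d) (Fin d × Fin d) ℂ) - Pm d)ᴴ * (1 - Pm d)
      = 1 - Pm d := by
    rw [Matrix.conjTranspose_sub, Matrix.conjTranspose_one, Pm_herm hd]
    rw [Matrix.sub_mul, Matrix.mul_sub, Matrix.mul_sub, Pm_mul_Pm hd]
    simp
  have h := Matrix.posSemidef_conjTranspose_mul_self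
    ((1 : Matrix (Fin d × Fin d) (Fin d × Fin d) ℂ) - Pm d)
  rwa [hq] at h

lemma realign_iso (hd : 2 ≤ d) (F : ℝ) :
    realign (isotropicState d F) =
      (((1 - F) * d / ((d:ℝ)^2 - 1) : ℝ) : ℂ) • Pm d
      + (((F * (d:ℝ)^2 - 1) / ((d:ℝ) * ((d:ℝ)^2 - 1)) : ℝ) : ℂ)
        • (1 : Matrix (Fin d × Fin d) (Fin d × Fin d) ℂ) := by
  have hd0 : 0 < d := by omega
  have hdc : (d:ℂ) ≠ 0 := Nat.cast_ne_zero.mpr hd0.ne'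
  have hdr : (d:ℝ) ≠ 0 := Nat.cast_ne_zero.mpr hd0.ne'
  have hd2 : (2:ℝ) ≤ d := by exact_mod_cast hd
  have hd1r : (d:ℝ)^2 - 1 ≠ 0 := by nlinarith
  have hd1 : (d:ℂ)^2 - 1 ≠ 0 := by
    have : (d:ℂ)^2 - 1 = (((d:ℝ)^2 - 1 : ℝ) : ℂ) := by push_cast; ring
    rw [this, Ne, Complex.ofReal_eq_zero]
    exact hd1r
  ext ⟨i,j⟩ ⟨k,l⟩
  show isotropicState d F (i,k) (j,l) = _
  rw [isotropicState,
    show Matrix.vecMulVec (psiPlus d) (star (psiPlus d)) = Pm d from rfl]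
  simp only [Matrix.add_apply, Matrix.smul_apply, Matrix.sub_apply, Matrix.one_apply,
    Pm_apply hd0, smul_eq_mul, Prod.mk.injEq]
  by_cases hij : i = j <;> by_cases hkl : k = l <;> by_cases hik : i = k <;>
      by_cases hjl : j = l <;>
    simp_all <;> push_cast <;> field_simp <;> ring

lemma tau_eq (hd : 2 ≤ d) (F : ℝ) :
    tauRealign (isotropicState d F) = 1/(d:ℝ) + |F * (d:ℝ)^2 - 1| / d := by
  have hd0 : 0 < d := by omega
  have hdr : (0:ℝ) < d := by exact_mod_cast hd0
  have hd2 : (2:ℝ) ≤ d := by exact_mod_cast hd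
  have hd1r : (0:ℝ) < (d:ℝ)^2 - 1 := by nlinarith
  set g : ℝ := (1 - F) * d / ((d:ℝ)^2 - 1) with hg
  set b : ℝ := (F * (d:ℝ)^2 - 1) / ((d:ℝ) * ((d:ℝ)^2 - 1)) with hb
  have hsum : g + b = 1 / d := by rw [hg, hb]; field_simp; ring
  set M := realign (isotropicState d F) with hM
  have hMeq : M = ((g:ℝ):ℂ) • Pm d + ((b:ℝ):ℂ) • 1 := realign_iso hd F
  set x : ℝ := |g + b| - |b| with hx
  set y : ℝ := |b| with hy
  set S : Matrix (Fin d × Fin d) (Fin d × Fin d) ℂ := (x:ℂ) • Pm d + (y:ℂ) • 1 with hSdef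
  have hS' : S = ((|g+b| : ℝ):ℂ) • Pm d + ((|b| : ℝ):ℂ) • (1 - Pm d) := by
    rw [hSdef, hx, hy]
    push_cast
    rw [smul_sub, sub_smul]
    abel
  have hSpsd : S.PosSemidef := by
    rw [hS']
    exact (psd_real_smul (Pm_psd hd0) (abs_nonneg _)).add
      (psd_real_smul (Q_psd hd0) (abs_nonneg _))
  have e1 := abs_mul_abs_self (g+b)
  have e2 := abs_mul_abs_self b
  have hc1 : x*x + 2*(x*y) = g*g + 2*(g*b) := by
    rw [hx, hy]; linear_combination e1 - e2
  have hc2 : y*y = b*b := by rw [hy]; linear_combination e2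
  have hsq : S ^ 2 = Mᴴ * M := by
    rw [pow_two, hMeq, affine_herm hd0, hSdef, affine_mul hd0, affine_mul hd0]
    have c1 : ((x:ℂ)*(x:ℂ) + 2*((x:ℂ)*(y:ℂ))) = ((g:ℂ)*(g:ℂ) + 2*((g:ℂ)*(b:ℂ))) := by
      exact_mod_cast congrArg (fun t : ℝ => (t:ℂ)) hc1
    have c2 : ((y:ℂ)*(y:ℂ)) = ((b:ℂ)*(b:ℂ)) := by
      exact_mod_cast congrArg (fun t : ℝ => (t:ℂ)) hc2
    rw [c1, c2]
  have hH := (Matrix.posSemidef_conjTranspose_mul_self M).1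
  have hSH : S.IsHermitian := hSpsd.1
  have hsqrt : traceNorm M = S.trace.re := by
    have h1 : traceNorm M = (hH.cfc Real.sqrt).trace.re := rfl
    rw [h1, ← Matrix.IsHermitian.cfc_eq hH Real.sqrt, ← hsq, ← cfc_pow_id (R := ℝ) S 2 hSH.isSelfAdjoint,
      ← cfc_comp Real.sqrt (fun t : ℝ => t ^ 2) S hSH.isSelfAdjoint]
    have heq : (spectrum ℝ S).EqOn (Real.sqrt ∘ (fun t : ℝ => t ^ 2)) id := by
      intro t ht
      rw [hSH.spectrum_real_eq_range_eigenvalues] at ht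
      obtain ⟨i, rfl⟩ := ht
      simp [Real.sqrt_sq (hSpsd.eigenvalues_nonneg i)]
    rw [(cfc_congr heq).trans (cfc_id ℝ S hSH.isSelfAdjoint)]
  rw [tauRealign]
  rw [show realign (isotropicState d F) = M from rfl, hsqrt]
  rw [hSdef, Matrix.trace_add, Matrix.trace_smul, Matrix.trace_smul, trace_Pm hd0,
    Matrix.trace_one]
  have hcard : (Fintype.card (Fin d × Fin d) : ℂ) = ((d:ℂ) * d) := by
    simp [Fintype.card_prod]
  rw [hcard]
  have hre : ((x:ℂ) • (1:ℂ) + (y:ℂ) • ((d:ℂ) * d)).re = x + y * (d*d) := by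
    push_cast
    simp [smul_eq_mul]
  rw [hre]
  have habs1 : |g + b| = 1 / d := by rw [hsum]; exact abs_of_pos (by positivity)
  have habs2 : |b| = |F * (d:ℝ)^2 - 1| / ((d:ℝ) * ((d:ℝ)^2 - 1)) := by
    rw [hb, abs_div, abs_of_pos (mul_pos hdr hd1r)]
  rw [hx, hy, habs1, habs2]
  field_simp
  ring

end TauAux

open TauAux in
/-- Trace norm of the realignment of the isotropic state: `τ(𝔄(ρ_F)) = dF` for
`1/d² ≤ F ≤ 1` and `τ(𝔄(ρ_F)) = 2/d − dF` for `0 ≤ F < 1/d²`. -/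
theorem tauRealign_isotropicState (d : ℕ) (hd : 2 ≤ d) (F : ℝ) (hF : 0 ≤ F ∧ F ≤ 1) :
    (1 / (d : ℝ) ^ 2 ≤ F → tauRealign (isotropicState d F) = d * F) ∧
    (F < 1 / (d : ℝ) ^ 2 → tauRealign (isotropicState d F) = 2 / d - d * F) := by
  have hd2 : (2:ℝ) ≤ d := by exact_mod_cast hd
  have hdr : (0:ℝ) < d := by linarith
  have key := TauAux.tau_eq hd F
  constructor
  · intro h
    have h1 : 1 ≤ F * (d:ℝ)^2 := by
      rw [div_le_iff₀ (by positivity)] at h; linarith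
    rw [key, abs_of_nonneg (by linarith)]
    field_simp
    ring
  · intro h
    have h1 : F * (d:ℝ)^2 < 1 := by
      rw [lt_div_iff₀ (by positivity)] at h; linarith
    rw [key, abs_of_neg (by linarith)]
    field_simp
    ring
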